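/- arXiv:1810.06197 — 4 statements merged into one kernel-verified Lean document; each statement's English description precedes it below -/
import Mathlib

section
/- Let K be an imaginary quadratic field of discriminant d_K, and let Q(x,y) = ax² + bxy + cy² be a primitive positive definite binary quadratic form of discriminant b² − 4ac = d_K. Let ω_Q = (−b + √d_K)/(2a) be the root of Q(x,1) in the upper half-plane. Then the lattice ℤω_Q + ℤ is a fractional ideal of K with absolute norm 1/a. -/
open NumberField Module Polynomial
open scoped nonZeroDivisors

/-!
Put `θ = a ω`. Multiplying the relation by `a` gives `θ² + b θ + a c = 0`, so `θ` is an algebraic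
integer, and `θ ∉ ℚ` because `b² - 4ac < 0`. Thus `(θ, 1)` is a `ℚ`-basis of `K` of discriminant
`b² - 4ac = d_K`; an integral family whose discriminant is `d_K` is a `ℤ`-basis of `𝓞 K`, so
`𝓞 K = ℤθ + ℤ`. Since `θ ω = -b ω - c`, the lattice `ℤω + ℤ` is an `𝓞 K`-submodule, and the base
change from `(θ, 1)` to `(ω, 1) = (θ / a, 1)` has determinant `1 / a`, which computes the norm.
-/

section Quadratic

variable {A : Type*} [CommRing A] {a b c : ℤ} {ω : A}

theorem isIntegral_of_sq_add_mul_add {x : A} (hx : x ^ 2 + b * x + c = 0) : IsIntegral ℤ x :=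
  ⟨X ^ 2 + C b * X + C c, by monicity!, by
    rwa [eval₂_add, eval₂_add, eval₂_mul, eval₂_pow, eval₂_C, eval₂_C, eval₂_X, algebraMap_int_eq,
      eq_intCast, eq_intCast]⟩

theorem sq_add_mul_add_eq_zero_of_quadratic (h : a * ω ^ 2 + b * ω + c = 0) :
    (a * ω) ^ 2 + b * (a * ω) + ((a * c : ℤ) : A) = 0 := by
  push_cast
  linear_combination (a : A) * h

theorem mul_mem_span_pair_of_quadratic (h : a * ω ^ 2 + b * ω + c = 0) {x : A}
    (hx : x ∈ Submodule.span ℤ {ω, 1}) : a * ω * x ∈ Submodule.span ℤ {ω, 1} := by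
  obtain ⟨m, n, rfl⟩ := Submodule.mem_span_pair.mp hx
  refine Submodule.mem_span_pair.mpr ⟨n * a - m * b, -(m * c), ?_⟩
  simp only [zsmul_eq_mul]
  push_cast
  linear_combination (-(m : A)) * h

end Quadratic

theorem notMem_range_algebraMap_of_discrim_neg {F L : Type*} [Field F] [LinearOrder F]
    [IsStrictOrderedRing F] [CommRing L] [Algebra F L] [FaithfulSMul F L] {p q : F} {x : L}
    (hx : x ^ 2 + algebraMap F L p * x + algebraMap F L q = 0) (hd : discrim 1 p q < 0) :
    x ∉ Set.range (algebraMap F L) := by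
  rintro ⟨y, rfl⟩
  have hy : 1 * (y * y) + p * y + q = 0 :=
    FaithfulSMul.algebraMap_injective F L (by simpa [sq] using hx)
  rw [discrim_eq_sq_of_quadratic_eq_zero hy] at hd
  exact (sq_nonneg _).not_gt hd

section QuadraticAlgebra

variable {F L : Type*} [Field F] [CommRing L] [Algebra F L] {p q : F} {x : L}

theorem linearIndependent_one_of_notMem_range [Nontrivial L]
    (hx : x ∉ Set.range (algebraMap F L)) : LinearIndependent F ![1, x] := by
  rw [LinearIndependent.pair_iff' one_ne_zero]
  intro r hr
  exact hx ⟨r, by rw [Algebra.algebraMap_eq_smul_one, hr]⟩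

variable (hrank : finrank F L = 2) (hli : LinearIndependent F ![1, x])
  (hx : x ^ 2 + algebraMap F L p * x + algebraMap F L q = 0)
include hrank hli hx

theorem Algebra.trace_eq_neg_of_sq_add_mul_add : Algebra.trace F L x = -p := by
  let B := basisOfLinearIndependentOfCardEqFinrank hli (by simp [hrank])
  have hB : ⇑B = ![1, x] := coe_basisOfLinearIndependentOfCardEqFinrank _ _
  have hx' : x * x = (-q) • B 0 + (-p) • B 1 := by
    simp only [hB, Matrix.cons_val_zero, Matrix.cons_val_one, Algebra.smul_def, map_neg]
    linear_combination hx
  rw [Algebra.trace_eq_matrix_trace B, Matrix.trace_fin_two, Algebra.leftMulMatrix_eq_repr_mul,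
    Algebra.leftMulMatrix_eq_repr_mul]
  have h0 : x * B 0 = B 1 := by simp [hB]
  have h1 : x * B 1 = x * x := by simp [hB]
  simp [h0, h1, hx']

theorem Algebra.discr_pair_eq_discrim : Algebra.discr F ![x, 1] = discrim 1 p q := by
  have htr := Algebra.trace_eq_neg_of_sq_add_mul_add hrank hli hx
  have hsq : x * x = (-p) • x + (-q) • 1 := by
    simp only [Algebra.smul_def, map_neg, mul_one]
    linear_combination hx
  have hone : Algebra.trace F L 1 = 2 := by
    rw [← map_one (algebraMap F L), Algebra.trace_algebraMap, hrank, nsmul_eq_mul]; norm_num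
  rw [Algebra.discr_def, Matrix.det_fin_two]
  simp only [Algebra.traceMatrix_apply, Algebra.traceForm_apply, Matrix.cons_val_zero,
    Matrix.cons_val_one, mul_one, one_mul, hsq, map_add, map_smul, htr, hone, smul_eq_mul]
  rw [discrim]
  ring

end QuadraticAlgebra

theorem Module.Basis.isUnit_det_of_discr_eq {A B ι : Type*} [CommRing A] [IsDomain A] [CommRing B]
    [Algebra A B] [Fintype ι] [DecidableEq ι] (b : Basis ι A B) {v : ι → B}
    (hv : Algebra.discr A v = Algebra.discr A b) (hb : Algebra.discr A b ≠ 0) :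
    IsUnit (b.det v) := by
  have hsq : b.det v ^ 2 = 1 := by
    rw [← b.toMatrix_map_vecMul v, Algebra.discr_of_matrix_vecMul] at hv
    rw [Basis.det_apply]
    exact mul_right_cancel₀ hb (hv.trans (one_mul _).symm)
  exact IsUnit.of_mul_eq_one _ (by rw [← sq, hsq])

section NumberField

variable {K : Type*} [Field K] [NumberField K]

theorem NumberField.RingOfIntegers.discr_coe {ι : Type*} [Fintype ι] [DecidableEq ι]
    (v : ι → 𝓞 K) : Algebra.discr ℚ (algebraMap (𝓞 K) K ∘ v) = Algebra.discr ℤ v := by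
  rw [Algebra.discr_def, Algebra.discr_def, Int.cast_det]
  congr 1
  ext i j
  simp only [Algebra.traceMatrix_apply, Algebra.traceForm_apply, Function.comp_apply,
    ← map_mul, Matrix.map_apply]
  exact Algebra.trace_localization ℤ ℤ⁰ _

theorem NumberField.RingOfIntegers.exists_basis_of_discr_eq {ι : Type*} [Fintype ι]
    [DecidableEq ι] (v : ι → 𝓞 K) (hcard : Fintype.card ι = finrank ℚ K)
    (hv : Algebra.discr ℚ (algebraMap (𝓞 K) K ∘ v) = discr K) :
    ∃ B : Basis ι ℤ (𝓞 K), ⇑B = v := by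
  let e : Basis ι ℤ (𝓞 K) := (RingOfIntegers.basis K).reindex <| Fintype.equivOfCardEq <| by
    rw [← finrank_eq_card_chooseBasisIndex, RingOfIntegers.rank, hcard]
  have he : Algebra.discr ℤ e = discr K := discr_eq_discr K e
  have hvℤ : Algebra.discr ℤ v = discr K := by
    exact_mod_cast (RingOfIntegers.discr_coe v).symm.trans hv
  obtain ⟨hli, hsp⟩ := e.is_basis_iff_det.mpr <|
    e.isUnit_det_of_discr_eq (hvℤ.trans he.symm) (he ▸ discr_ne_zero K)
  exact ⟨Basis.mk hli hsp.ge, Basis.coe_mk _ _⟩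

theorem exists_fractionalIdeal_coe_eq_span_pair {a b c : ℤ} {ω : K}
    (hroot : a * ω ^ 2 + b * ω + c = 0) (ha : a ≠ 0) {θ : 𝓞 K}
    (hθ : algebraMap (𝓞 K) K θ = a * ω) (hθspan : Submodule.span ℤ {θ, 1} = ⊤) :
    ∃ I : FractionalIdeal (𝓞 K)⁰ K,
      ((I : Submodule (𝓞 K) K) : Set K) = Submodule.span ℤ {ω, (1 : K)} := by
  set L := Submodule.span ℤ {ω, (1 : K)}
  let N : Submodule (𝓞 K) K :=
    { L with
      smul_mem' := fun r x hx => by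
        obtain ⟨m, n, hr⟩ := Submodule.mem_span_pair.mp (hθspan ▸ Submodule.mem_top : r ∈ _)
        have hrx : r • x = m • (a * ω * x) + n • x := by
          rw [Algebra.smul_def, ← hr, map_add, map_zsmul, map_zsmul, hθ, map_one,
            zsmul_eq_mul, zsmul_eq_mul, zsmul_eq_mul, zsmul_eq_mul]
          ring
        rw [hrx]
        exact L.add_mem (L.smul_mem m (mul_mem_span_pair_of_quadratic hroot hx))
          (L.smul_mem n hx) }
  have hfrac : IsFractional (𝓞 K)⁰ N := by
    refine ⟨a, mem_nonZeroDivisors_of_ne_zero (by exact_mod_cast ha), fun x hx => ?_⟩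
    obtain ⟨m, n, rfl⟩ := Submodule.mem_span_pair.mp hx
    refine ⟨m * θ + n * a, ?_⟩
    simp only [Algebra.smul_def, map_add, map_mul, map_intCast, hθ, algebraMap_int_eq, eq_intCast]
    ring
  exact ⟨⟨N, hfrac⟩, rfl⟩

theorem FractionalIdeal.absNorm_eq_of_coe_eq_span_pair {a : ℤ} {ω : K} (ha : a ≠ 0) {θ : 𝓞 K}
    (hθ : algebraMap (𝓞 K) K θ = a * ω) (bO : Basis (Fin 2) ℤ (𝓞 K)) (hbO : ⇑bO = ![θ, 1])
    (I : FractionalIdeal (𝓞 K)⁰ K)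
    (hI : ((I : Submodule (𝓞 K) K) : Set K) = Submodule.span ℤ {ω, (1 : K)}) :
    FractionalIdeal.absNorm I = |(a : ℚ)|⁻¹ := by
  have hli : LinearIndependent ℤ ![ω, 1] := by
    refine LinearIndependent.pair_iff.mpr fun s t hst => ?_
    have h : s • θ + (t * a) • (1 : 𝓞 K) = 0 := FaithfulSMul.algebraMap_injective (𝓞 K) K <| by
      rw [map_add, map_zsmul, map_zsmul, map_one, map_zero, hθ]
      simp only [zsmul_eq_mul] at hst ⊢
      push_cast
      linear_combination (a : K) * hst
    obtain ⟨hs, hta⟩ := LinearIndependent.pair_iff.mp (hbO ▸ bO.linearIndependent) s (t * a) h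
    exact ⟨hs, (mul_eq_zero.mp hta).resolve_right ha⟩
  let bI : Basis (Fin 2) ℤ I := (Basis.span hli).map <|
    LinearEquiv.ofEq _ ((I : Submodule (𝓞 K) K).restrictScalars ℤ) <| by
      rw [Matrix.range_cons_cons_empty]; exact SetLike.coe_injective hI.symm
  have hbI : ((↑) ∘ bI : Fin 2 → K) = ![ω, 1] := by
    ext i
    exact congrArg Subtype.val (Basis.span_apply hli i)
  rw [← FractionalIdeal.abs_det_basis_change bO I bI, hbI]
  set b₀ := bO.localizationLocalization ℚ ℤ⁰ K
  have hb₀ : ∀ i, b₀ i = algebraMap (𝓞 K) K (bO i) := bO.localizationLocalization_apply ℚ ℤ⁰ K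
  have hω : ω = (a : ℚ)⁻¹ • b₀ 0 := by
    rw [hb₀, hbO, Matrix.cons_val_zero, hθ, Rat.smul_def, Rat.cast_inv, Rat.cast_intCast,
      inv_mul_cancel_left₀ (by exact_mod_cast ha)]
  have h1 : (1 : K) = b₀ 1 := by simp [hb₀, hbO]
  rw [Basis.det_apply, Matrix.det_fin_two]
  simp [Basis.toMatrix_apply, hω, h1, abs_inv]

end NumberField

theorem stmt0_general (K : Type*) [Field K] [NumberField K]
    (hdeg : Module.finrank ℚ K = 2) (hneg : NumberField.discr K < 0)
    (a b c : ℤ) (hpos : 0 < a)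
    (hdisc : b ^ 2 - 4 * a * c = NumberField.discr K)
    (ω : K) (hroot : (a : K) * ω ^ 2 + (b : K) * ω + (c : K) = 0) :
    ∃ I : FractionalIdeal (𝓞 K)⁰ K,
      ((I : Submodule (𝓞 K) K) : Set K) = (Submodule.span ℤ {ω, (1 : K)} : Set K) ∧
      FractionalIdeal.absNorm I = 1 / (a : ℚ) := by
  have hθ := sq_add_mul_add_eq_zero_of_quadratic hroot
  have hθℚ : (a * ω) ^ 2 + algebraMap ℚ K b * (a * ω) + algebraMap ℚ K (a * c : ℤ) = 0 := by
    simpa only [map_intCast] using hθ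
  have hdiscrim : discrim 1 (b : ℚ) (a * c : ℤ) = discr K := by
    rw [discrim, ← hdisc]; push_cast; ring
  have hli : LinearIndependent ℚ ![1, a * ω] :=
    linearIndependent_one_of_notMem_range <| notMem_range_algebraMap_of_discrim_neg hθℚ <| by
      rw [hdiscrim]; exact_mod_cast hneg
  let θ : 𝓞 K := ⟨a * ω, isIntegral_of_sq_add_mul_add hθ⟩
  have hθK : algebraMap (𝓞 K) K ∘ ![θ, 1] = ![a * ω, 1] := by
    ext i; fin_cases i <;> rfl
  obtain ⟨B, hB⟩ := RingOfIntegers.exists_basis_of_discr_eq ![θ, 1] (by simp [hdeg]) <| by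
    rw [hθK, Algebra.discr_pair_eq_discrim hdeg hli hθℚ, hdiscrim]
  have hθspan : Submodule.span ℤ {θ, 1} = ⊤ := by
    rw [← Matrix.range_cons_cons_empty, ← hB, B.span_eq]
  obtain ⟨I, hI⟩ := exists_fractionalIdeal_coe_eq_span_pair hroot hpos.ne' rfl hθspan
  refine ⟨I, hI, ?_⟩
  rw [FractionalIdeal.absNorm_eq_of_coe_eq_span_pair hpos.ne' rfl B hB I hI,
    abs_of_pos (by exact_mod_cast hpos), one_div]

/-- Let `K` be an imaginary quadratic field of discriminant `d_K`,
and `Q = ax² + bxy + cy²` a primitive positive definite binary quadratic form of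
discriminant `d_K`, with root `ω_Q ∈ K` lying in the upper half-plane (via a complex
embedding `ι`).  Then the lattice `ℤω_Q + ℤ` is a fractional ideal of `K` with
absolute norm `1/a`. -/
theorem stmt0 (K : Type*) [Field K] [NumberField K]
    (hdeg : Module.finrank ℚ K = 2) (hneg : NumberField.discr K < 0)
    (ι : K →+* ℂ)
    (a b c : ℤ) (hpos : 0 < a)
    (hprim : Int.gcd a (Int.gcd b c) = 1)
    (hdisc : b ^ 2 - 4 * a * c = NumberField.discr K)
    (ω : K) (hroot : (a : K) * ω ^ 2 + (b : K) * ω + (c : K) = 0)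
    (him : 0 < (ι ω).im) :
    ∃ I : FractionalIdeal (𝓞 K)⁰ K,
      ((I : Submodule (𝓞 K) K) : Set K) = (Submodule.span ℤ {ω, (1 : K)} : Set K) ∧
      FractionalIdeal.absNorm I = 1 / (a : ℚ) :=
  stmt0_general K hdeg hneg a b c hpos hdisc ω hroot
end

section
/- Let K be an imaginary quadratic field, 𝔫 a nonzero ideal of O_K, and N the smallest positive integer in 𝔫. Let Q = ax² + bxy + cy² be a primitive positive definite form of discriminant d_K with gcd(N, a) = 1, and let 𝔪 = ℤ(−a·conj(ω_Q)) + ℤa where ω_Q = (−b+√d_K)/(2a). Then 𝔫 and 𝔪 are relatively prime ideals of O_K (i.e., 𝔫 + 𝔪 = O_K), and the smallest positive integer in 𝔫𝔪 is Na. -/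
/-!
An integer lies in `𝔪 = ℤ(−a·ω̄) + ℤa` only if it is a multiple of `a`: comparing imaginary
parts under `ι` kills the coefficient of the non-real `ω̄`. So `𝔪 ∩ ℤ = aℤ`, while `𝔫 ∩ ℤ = Nℤ`.
As `N` and `a` are coprime integers, a Bézout relation puts `1` in `𝔫 + 𝔪`, and an integer in
`𝔫𝔪 ⊆ 𝔫 ∩ 𝔪` is divisible by both `N` and `a`, hence by `Na ∈ 𝔫𝔪`.
-/

open NumberField

namespace Ideal

variable {R : Type*} [CommRing R]

theorem isLeast_intCast_mem_iff (I : Ideal R) (N : ℤ) :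
    IsLeast {n : ℤ | 0 < n ∧ (n : R) ∈ I} N ↔ 0 < N ∧ ∀ n : ℤ, (n : R) ∈ I ↔ N ∣ n := by
  constructor
  · rintro ⟨⟨hN0, hNI⟩, hleast⟩
    refine ⟨hN0, fun n => ⟨fun hn => ?_, ?_⟩⟩
    · have hrem : ((n % N : ℤ) : R) ∈ I := by
        rw [Int.emod_def]
        push_cast
        exact I.sub_mem hn (I.mul_mem_right _ hNI)
      by_contra hndvd
      have hpos : 0 < n % N :=
        lt_of_le_of_ne (Int.emod_nonneg n hN0.ne') (Ne.symm (mt Int.dvd_of_emod_eq_zero hndvd))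
      exact absurd (hleast ⟨hpos, hrem⟩) (not_le.2 (Int.emod_lt_of_pos n hN0))
    · rintro ⟨k, rfl⟩
      exact_mod_cast I.mul_mem_right (k : R) hNI
  · rintro ⟨hN0, hmem⟩
    exact ⟨⟨hN0, (hmem N).2 dvd_rfl⟩, fun n ⟨hn0, hn⟩ => Int.le_of_dvd hn0 ((hmem n).1 hn)⟩

theorem sup_eq_top_of_isCoprime_intCast_mem {I J : Ideal R} {N a : ℤ} (hcop : IsCoprime N a)
    (hN : (N : R) ∈ I) (ha : (a : R) ∈ J) : I ⊔ J = ⊤ := by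
  obtain ⟨u, v, huv⟩ := hcop
  rw [eq_top_iff_one, ← Int.cast_one, ← huv]
  push_cast
  exact add_mem (mem_sup_left (I.mul_mem_left _ hN)) (mem_sup_right (J.mul_mem_left _ ha))

theorem intCast_mem_mul_iff_of_isCoprime {I J : Ideal R} {N a : ℤ} (hcop : IsCoprime N a)
    (hI : ∀ n : ℤ, (n : R) ∈ I ↔ N ∣ n) (hJ : ∀ n : ℤ, (n : R) ∈ J ↔ a ∣ n) (n : ℤ) :
    (n : R) ∈ I * J ↔ N * a ∣ n := by
  constructor
  · intro hn
    have hIJ := mul_le_inf hn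
    exact hcop.mul_dvd ((hI n).1 hIJ.1) ((hJ n).1 hIJ.2)
  · rintro ⟨k, rfl⟩
    push_cast
    exact (I * J).mul_mem_right _ (mul_mem_mul ((hI N).2 dvd_rfl) ((hJ a).2 dvd_rfl))

end Ideal

theorem intCast_mem_span_pair_iff_dvd {K : Type*} [Ring K] (ι : K →+* ℂ) {x : K}
    (hx : (ι x).im ≠ 0) (a n : ℤ) :
    (n : K) ∈ Submodule.span ℤ ({x, (a : K)} : Set K) ↔ a ∣ n := by
  rw [Submodule.mem_span_pair]
  constructor
  · rintro ⟨s, t, hst⟩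
    have hι : (s : ℂ) * ι x + (t * a : ℤ) = n := by
      simpa [zsmul_eq_mul] using congrArg ι hst
    have hs : s = 0 := by
      simpa [hx] using congrArg Complex.im hι
    rw [hs, Int.cast_zero, zero_mul, zero_add] at hι
    exact ⟨t, by rw [← Int.cast_inj.1 hι, mul_comm]⟩
  · rintro ⟨k, rfl⟩
    exact ⟨0, k, by simpa using Int.cast_comm k (a : K)⟩

theorem stmt5_general (K : Type*) [Field K]
    (ι : K →+* ℂ)
    (𝔫 : Ideal (𝓞 K))
    (N : ℤ) (hN : IsLeast {n : ℤ | 0 < n ∧ ((n : ℤ) : 𝓞 K) ∈ 𝔫} N)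
    (a : ℤ) (hpos : 0 < a)
    (hgcd : Int.gcd N a = 1)
    (ω ωbar : K)
    (him : 0 < (ι ω).im)
    (hconj : ι ωbar = (starRingEnd ℂ) (ι ω))
    (𝔪 : Ideal (𝓞 K))
    (h𝔪 : algebraMap (𝓞 K) K '' (𝔪 : Set (𝓞 K))
      = (Submodule.span ℤ ({-(a : K) * ωbar, (a : K)} : Set K) : Set K)) :
    𝔫 ⊔ 𝔪 = ⊤ ∧
    IsLeast {n : ℤ | 0 < n ∧ ((n : ℤ) : 𝓞 K) ∈ 𝔫 * 𝔪} (N * a) := by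
  obtain ⟨hN0, h𝔫⟩ := (Ideal.isLeast_intCast_mem_iff 𝔫 N).1 hN
  have hcop : IsCoprime N a := Int.isCoprime_iff_gcd_eq_one.2 hgcd
  have hx : (ι (-(a : K) * ωbar)).im ≠ 0 := by
    simp [hconj, hpos.ne', him.ne']
  have h𝔪a (n : ℤ) : (n : 𝓞 K) ∈ 𝔪 ↔ a ∣ n := by
    rw [← SetLike.mem_coe, ← (FaithfulSMul.algebraMap_injective (𝓞 K) K).mem_set_image,
      map_intCast, h𝔪, SetLike.mem_coe, intCast_mem_span_pair_iff_dvd ι hx]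
  refine ⟨Ideal.sup_eq_top_of_isCoprime_intCast_mem hcop hN.1.2 ((h𝔪a a).2 dvd_rfl), ?_⟩
  exact (Ideal.isLeast_intCast_mem_iff _ _).2
    ⟨mul_pos hN0 hpos, Ideal.intCast_mem_mul_iff_of_isCoprime hcop h𝔫 h𝔪a⟩

/-- Let `K` be an imaginary quadratic field, `𝔫` a nonzero ideal of
`O_K` with smallest positive integer `N`, and `Q = ax² + bxy + cy²` a primitive
positive definite form of discriminant `d_K` with `gcd(N, a) = 1`.  With
`𝔪 = ℤ(−a·conj(ω_Q)) + ℤa`, the ideals `𝔫` and `𝔪` are relatively prime, and the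
smallest positive integer in `𝔫𝔪` is `Na`. -/
theorem stmt5 (K : Type*) [Field K] [NumberField K]
    (hdeg : Module.finrank ℚ K = 2) (hneg : NumberField.discr K < 0)
    (ι : K →+* ℂ)
    (𝔫 : Ideal (𝓞 K)) (h𝔫0 : 𝔫 ≠ ⊥)
    (N : ℤ) (hN : IsLeast {n : ℤ | 0 < n ∧ ((n : ℤ) : 𝓞 K) ∈ 𝔫} N)
    (a b c : ℤ) (hpos : 0 < a)
    (hprim : Int.gcd a (Int.gcd b c) = 1)
    (hdisc : b ^ 2 - 4 * a * c = NumberField.discr K)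
    (hgcd : Int.gcd N a = 1)
    (ω ωbar : K)
    (hroot : (a : K) * ω ^ 2 + (b : K) * ω + (c : K) = 0)
    (him : 0 < (ι ω).im)
    (hconj : ι ωbar = (starRingEnd ℂ) (ι ω))
    (𝔪 : Ideal (𝓞 K))
    (h𝔪 : algebraMap (𝓞 K) K '' (𝔪 : Set (𝓞 K))
      = (Submodule.span ℤ ({-(a : K) * ωbar, (a : K)} : Set K) : Set K)) :
    𝔫 ⊔ 𝔪 = ⊤ ∧
    IsLeast {n : ℤ | 0 < n ∧ ((n : ℤ) : 𝓞 K) ∈ 𝔫 * 𝔪} (N * a) :=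
  stmt5_general K ι 𝔫 N hN a hpos hgcd ω ωbar him hconj 𝔪 h𝔪
end

section
/- Let K be an imaginary quadratic field of discriminant d_K with O_K = ℤτ_K + ℤ, let 𝔫 be a nonzero proper ideal of O_K with canonical basis 𝔫 = ℤ(a₁τ_K + a₂) + ℤN (so 0 < a₁ ≤ N, 0 ≤ a₂ < N, a₁ ∣ N, a₁ ∣ a₂, and N is the smallest positive integer in 𝔫). Let Q = ax² + bxy + cy² be a primitive positive definite form of discriminant d_K with gcd(N,a)=1, and let d_Q be the unique integer with d_Q ≡ −a₁(b+b_K)/2 + a₂ (mod N), d_Q ≡ 0 (mod a), and 0 ≤ d_Q + a₁(b+b_K)/2 < Na. Then with 𝔪 = ℤ(−a·conj(ω_Q)) + ℤa, the product ideal satisfies 𝔫𝔪 = ℤ(a₁(−a·conj(ω_Q)) + d_Q) + ℤ(Na). -/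
/-!
Put `μ = -a·ω̄`, a root of `X² - bX + ac`. Comparing the roots of `Q(X, 1)` in the upper
half-plane gives `μ = τ_K + e`, so `𝔫 = a₁(ℤ(μ + t) + ℤn)` with `a₂ = a₁s`, `N = a₁n`,
`t = s - e`, and `𝔪 = ℤμ + ℤa`. As `μ ∈ 𝔪 ⊆ O_K`, `μ𝔫 ⊆ 𝔫`; since `1, μ` are
ℤ-independent this forces `n ∣ t² + bt + ac`, the norm of `μ + t`. The ℤ-span of the four
products of basis vectors is then matched with `ℤ(a₁μ + d_Q) + ℤ(Na)` by explicit integer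
combinations, using `d_Q ≡ a₁t (mod N)`, `a ∣ d_Q` and `gcd(N, a) = 1`.
-/

open NumberField Complex Submodule Pointwise

theorem image_mul_eq_span_mul {R K : Type*} [CommRing R] [CommRing K] [Algebra R K]
    {I J : Ideal R} {S T : Set K}
    (hI : algebraMap R K '' I = span ℤ S) (hJ : algebraMap R K '' J = span ℤ T) :
    algebraMap R K '' ↑(I * J) = span ℤ (S * T) := by
  let f := (Algebra.ofId R K).toLinearMap
  have hI' : (Submodule.map f I).restrictScalars ℤ = span ℤ S :=
    SetLike.coe_injective (by rw [coe_restrictScalars, map_coe, ← hI]; rfl)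
  have hJ' : (Submodule.map f J).restrictScalars ℤ = span ℤ T :=
    SetLike.coe_injective (by rw [coe_restrictScalars, map_coe, ← hJ]; rfl)
  rw [← span_mul_span, ← hI', ← hJ', ← restrictScalars_mul, ← Submodule.map_mul,
    coe_restrictScalars, map_coe]
  rfl

theorem Complex.eq_of_sq_eq_of_im_pos {z w : ℂ} (h : z ^ 2 = w ^ 2) (hz : 0 < z.im)
    (hw : 0 < w.im) : z = w := by
  rcases sq_eq_sq_iff_eq_or_eq_neg.mp h with h | h
  · exact h
  · have := congrArg Complex.im h
    simp only [Complex.neg_im] at this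
    linarith

theorem linearIndependent_pair_one_of_im_ne_zero {K : Type*} [Ring K] (ι : K →+* ℂ) {x : K}
    (hx : (ι x).im ≠ 0) : LinearIndependent ℤ ![x, 1] := by
  refine LinearIndependent.pair_iff.mpr fun s t h => ?_
  have h' : (s : ℂ) * ι x + t = 0 := by simpa using congrArg ι h
  have hs : s = 0 := by simpa [hx] using congrArg Complex.im h'
  subst hs
  exact ⟨rfl, by simpa using h'⟩

theorem two_mul_mul_add_eq_I_mul_sqrt {a b c D : ℤ} (ha : 0 < a) (hD : D < 0)
    (hdisc : b ^ 2 - 4 * a * c = D) {z : ℂ} (hz : a * z ^ 2 + b * z + c = 0)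
    (him : 0 < z.im) : 2 * a * z + b = I * Real.sqrt (-(D : ℝ)) := by
  have hD' : (0 : ℝ) < -(D : ℝ) := by exact_mod_cast neg_pos.mpr hD
  apply Complex.eq_of_sq_eq_of_im_pos
  · have hsq : ((Real.sqrt (-(D : ℝ)) : ℝ) : ℂ) ^ 2 = -(D : ℂ) := by
      rw [← Complex.ofReal_pow, Real.sq_sqrt hD'.le]; push_cast; ring
    have hdiscC : (b : ℂ) ^ 2 - 4 * a * c = D := by exact_mod_cast hdisc
    linear_combination 4 * (a : ℂ) * hz + hdiscC - I ^ 2 * hsq + (D : ℂ) * I_sq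
  · simpa using mul_pos (mul_pos two_pos (Int.cast_pos.mpr ha)) him
  · simpa using Real.sqrt_pos.mpr hD'

theorem neg_mul_conj_root_eq {K : Type*} [Field K] (ι : K →+* ℂ) {a b c D b_K e : ℤ}
    (ha : 0 < a) (hD : D < 0) (hdisc : b ^ 2 - 4 * a * c = D) {τ ω ωbar : K}
    (hτ : (2 : ℂ) * ι τ = -(b_K : ℂ) + I * Real.sqrt (-(D : ℝ)))
    (hroot : (a : K) * ω ^ 2 + (b : K) * ω + (c : K) = 0) (him : 0 < (ι ω).im)
    (hconj : ι ωbar = (starRingEnd ℂ) (ι ω)) (he : 2 * e = b + b_K) :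
    -(a : K) * ωbar = τ + e := by
  have hrootC : (a : ℂ) * ι ω ^ 2 + b * ι ω + c = 0 := by simpa using congrArg ι hroot
  have h := congrArg (starRingEnd ℂ) (two_mul_mul_add_eq_I_mul_sqrt ha hD hdisc hrootC him)
  simp only [map_add, map_mul, map_intCast, map_ofNat, conj_I, conj_ofReal, ← hconj] at h
  have heC : (2 : ℂ) * e = b + b_K := by exact_mod_cast he
  apply ι.injective
  simp only [map_mul, map_neg, map_intCast, map_add]
  linear_combination (-h - hτ - heC) / 2

section Lattice

variable {K : Type*} [CommRing K] {μ : K} {a b c a₁ n t : ℤ}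

theorem dvd_of_mul_mem_span_pair (hμ : μ ^ 2 = b * μ - a * c)
    (hind : LinearIndependent ℤ ![μ, 1]) (ha₁ : a₁ ≠ 0)
    (hmem : μ * (a₁ * (μ + t)) ∈ span ℤ {(a₁ : K) * (μ + t), ((a₁ * n : ℤ) : K)}) :
    n ∣ t ^ 2 + b * t + a * c := by
  obtain ⟨x, y, hxy⟩ := mem_span_pair.mp hmem
  have hzero : (a₁ * (x - b - t)) • μ + (a₁ * (x * t + y * n + a * c)) • (1 : K) = 0 := by
    simp only [zsmul_eq_mul] at hxy ⊢
    push_cast at hxy ⊢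
    linear_combination hxy + (a₁ : K) * hμ
  obtain ⟨hx, hy⟩ := LinearIndependent.pair_iff.mp hind _ _ hzero
  have hx' : x = b + t := by
    have := (mul_eq_zero.mp hx).resolve_left ha₁
    omega
  refine ⟨-y, ?_⟩
  have := (mul_eq_zero.mp hy).resolve_left ha₁
  rw [hx'] at this
  linear_combination this

theorem span_mul_pair_pair_le {d : ℤ} (hμ : μ ^ 2 = b * μ - a * c)
    (hcop : IsCoprime (a₁ * n) a) (hnorm : n ∣ t ^ 2 + b * t + a * c)
    (hdt : d ≡ a₁ * t [ZMOD a₁ * n]) (had : a ∣ d) :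
    span ℤ ({(a₁ : K) * (μ + t), ((a₁ * n : ℤ) : K)} * {μ, (a : K)})
      ≤ span ℤ {(a₁ : K) * μ + d, ((a₁ * n * a : ℤ) : K)} := by
  obtain ⟨k, hk⟩ := hdt.symm.dvd
  have ha₁d : a₁ ∣ d := ⟨t + n * k, by linear_combination hk⟩
  obtain ⟨m, hm⟩ := (hcop.of_isCoprime_of_dvd_left (dvd_mul_right a₁ n)).mul_dvd ha₁d had
  obtain ⟨q, hq⟩ := hnorm
  obtain ⟨l, hl⟩ : a₁ * n * a ∣ (b + t) * d + a₁ * a * c :=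
    hcop.mul_dvd ⟨q + (b + t) * k, by linear_combination (b + t) * hk + a₁ * hq⟩
      ⟨(b + t) * a₁ * m + a₁ * c, by linear_combination (b + t) * hm⟩
  have hkK := congrArg (Int.cast : ℤ → K) hk
  have hmK := congrArg (Int.cast : ℤ → K) hm
  have hlK := congrArg (Int.cast : ℤ → K) hl
  push_cast at hkK hmK hlK
  rw [span_le]
  rintro _ ⟨x, hx, y, hy, rfl⟩
  simp only [Set.mem_insert_iff, Set.mem_singleton_iff] at hx hy
  rw [SetLike.mem_coe, mem_span_pair]
  simp only [zsmul_eq_mul]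
  push_cast
  rcases hx with rfl | rfl <;> rcases hy with rfl | rfl
  · exact ⟨b + t, -l, by push_cast; linear_combination -(a₁ : K) * hμ + hlK⟩
  · exact ⟨a, -k, by push_cast; linear_combination (a : K) * hkK⟩
  · exact ⟨n, -m, by push_cast; linear_combination (n : K) * hmK⟩
  · exact ⟨0, 1, by simp⟩

theorem span_pair_le_span_mul_pair_pair {d : ℤ} (hcop : IsCoprime (a₁ * n) a)
    (hdt : d ≡ a₁ * t [ZMOD a₁ * n]) (had : a ∣ d) :
    span ℤ {(a₁ : K) * μ + d, ((a₁ * n * a : ℤ) : K)}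
      ≤ span ℤ ({(a₁ : K) * (μ + t), ((a₁ * n : ℤ) : K)} * {μ, (a : K)}) := by
  obtain ⟨k, hk⟩ := hdt.symm.dvd
  obtain ⟨m, hm⟩ := had
  obtain ⟨β, α, hβα⟩ := hcop
  obtain ⟨γ, hγ⟩ : a₁ * n * a ∣ d - α * a * a₁ * t :=
    IsCoprime.mul_dvd ⟨β, α, hβα⟩ ⟨k + β * a₁ * t, by linear_combination hk - a₁ * t * hβα⟩
      ⟨m - α * a₁ * t, by linear_combination hm⟩
  have hβαK := congrArg (Int.cast : ℤ → K) hβα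
  have hγK := congrArg (Int.cast : ℤ → K) hγ
  push_cast at hβαK hγK
  have hG : (a₁ : K) * μ + d = (β * a₁) • ((a₁ * n : ℤ) * μ) + α • (a₁ * (μ + t) * a)
      + γ • ((a₁ * n : ℤ) * (a : K)) := by
    simp only [zsmul_eq_mul]
    push_cast
    linear_combination -(a₁ : K) * μ * hβαK + hγK
  have hmul : ∀ {x y : K}, x ∈ ({(a₁ : K) * (μ + t), ((a₁ * n : ℤ) : K)} : Set K) →
      y ∈ ({μ, (a : K)} : Set K) →
      x * y ∈ span ℤ ({(a₁ : K) * (μ + t), ((a₁ * n : ℤ) : K)} * {μ, (a : K)}) :=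
    fun hx hy => subset_span (Set.mul_mem_mul hx hy)
  rw [span_le, Set.insert_subset_iff, Set.singleton_subset_iff, SetLike.mem_coe,
    SetLike.mem_coe, hG]
  refine ⟨add_mem (add_mem (smul_mem _ _ (hmul (by simp) (by simp)))
    (smul_mem _ _ (hmul (by simp) (by simp)))) (smul_mem _ _ (hmul (by simp) (by simp))), ?_⟩
  simpa using hmul (by simp) (by simp)

theorem span_mul_pair_pair_eq {d : ℤ} (hμ : μ ^ 2 = b * μ - a * c)
    (hcop : IsCoprime (a₁ * n) a) (hnorm : n ∣ t ^ 2 + b * t + a * c)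
    (hdt : d ≡ a₁ * t [ZMOD a₁ * n]) (had : a ∣ d) :
    span ℤ ({(a₁ : K) * (μ + t), ((a₁ * n : ℤ) : K)} * {μ, (a : K)})
      = span ℤ {(a₁ : K) * μ + d, ((a₁ * n * a : ℤ) : K)} :=
  le_antisymm (span_mul_pair_pair_le hμ hcop hnorm hdt had)
    (span_pair_le_span_mul_pair_pair hcop hdt had)

end Lattice

theorem stmt6_general (K : Type*) [Field K] [NumberField K]
    (hneg : NumberField.discr K < 0)
    (ι : K →+* ℂ)
    (b_K : ℤ) (τ : K)
    (hτ : (2 : ℂ) * ι τ = -(b_K : ℂ) + Complex.I * Real.sqrt (-(NumberField.discr K : ℝ)))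
    (𝔫 : Ideal (𝓞 K))
    (N a₁ a₂ : ℤ)
    (ha₁ : 0 < a₁)
    (hd₁ : a₁ ∣ N) (hd₂ : a₁ ∣ a₂)
    (hbasis𝔫 : algebraMap (𝓞 K) K '' (𝔫 : Set (𝓞 K))
      = (Submodule.span ℤ ({(a₁ : K) * τ + (a₂ : K), (N : K)} : Set K) : Set K))
    (a b c : ℤ) (hpos : 0 < a)
    (hdisc : b ^ 2 - 4 * a * c = NumberField.discr K)
    (hgcd : Int.gcd N a = 1)
    (ω ωbar : K)
    (hroot : (a : K) * ω ^ 2 + (b : K) * ω + (c : K) = 0)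
    (him : 0 < (ι ω).im)
    (hconj : ι ωbar = (starRingEnd ℂ) (ι ω))
    (e : ℤ) (he : 2 * e = b + b_K)
    (d_Q : ℤ)
    (hdQ1 : d_Q ≡ -a₁ * e + a₂ [ZMOD N])
    (hdQ2 : a ∣ d_Q)
    (𝔪 : Ideal (𝓞 K))
    (h𝔪 : algebraMap (𝓞 K) K '' (𝔪 : Set (𝓞 K))
      = (Submodule.span ℤ ({-(a : K) * ωbar, (a : K)} : Set K) : Set K)) :
    algebraMap (𝓞 K) K '' ((𝔫 * 𝔪 : Ideal (𝓞 K)) : Set (𝓞 K))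
      = (Submodule.span ℤ
          ({(a₁ : K) * (-(a : K) * ωbar) + (d_Q : K), ((N * a : ℤ) : K)} : Set K) : Set K) := by
  have hμτ := neg_mul_conj_root_eq ι hpos hneg hdisc hτ hroot him hconj he
  set μ : K := -(a : K) * ωbar with hμ
  have hroot' : (a : K) * ωbar ^ 2 + (b : K) * ωbar + (c : K) = 0 := by
    apply ι.injective
    simpa [hconj] using congrArg (starRingEnd ℂ ∘ ι) hroot
  have hμsq : μ ^ 2 = b * μ - a * c := by linear_combination (a : K) * hroot'
  have hind : LinearIndependent ℤ ![μ, 1] :=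
    linearIndependent_pair_one_of_im_ne_zero ι (by simp [hμ, hconj]; exact ⟨hpos.ne', him.ne'⟩)
  obtain ⟨s, rfl⟩ := hd₂
  obtain ⟨n, rfl⟩ := hd₁
  have h𝔫 : algebraMap (𝓞 K) K '' 𝔫
      = span ℤ {(a₁ : K) * (μ + (s - e : ℤ)), ((a₁ * n : ℤ) : K)} := by
    rw [hbasis𝔫, hμτ]
    congr 4
    push_cast
    ring
  have hnorm : n ∣ (s - e) ^ 2 + b * (s - e) + a * c := by
    refine dvd_of_mul_mem_span_pair hμsq hind ha₁.ne' ?_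
    obtain ⟨x, -, hxμ⟩ : μ ∈ algebraMap (𝓞 K) K '' 𝔪 := h𝔪 ▸ subset_span (by simp)
    obtain ⟨y, hy, hyu⟩ : (a₁ : K) * (μ + (s - e : ℤ)) ∈ algebraMap (𝓞 K) K '' 𝔫 :=
      h𝔫 ▸ subset_span (by simp)
    rw [← SetLike.mem_coe, ← h𝔫, ← hyu, ← hxμ, ← map_mul]
    exact Set.mem_image_of_mem _ (𝔫.mul_mem_left x hy)
  have hdQ : d_Q ≡ a₁ * (s - e) [ZMOD a₁ * n] := by convert hdQ1 using 1; ring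
  rw [image_mul_eq_span_mul h𝔫 h𝔪,
    span_mul_pair_pair_eq hμsq (Int.isCoprime_iff_gcd_eq_one.mpr hgcd) hnorm hdQ hdQ2]

/-- Let `K` be an imaginary quadratic field of discriminant `d_K`
with `O_K = ℤτ_K + ℤ`, `τ_K = (−b_K + √d_K)/2`, and let `𝔫` be a nonzero proper ideal
of `O_K` with canonical basis `𝔫 = ℤ(a₁τ_K + a₂) + ℤN`.  Let `Q = ax² + bxy + cy²` be a
primitive positive definite form of discriminant `d_K` with `gcd(N,a) = 1`, and `d_Q`
the unique integer with `d_Q ≡ −a₁(b+b_K)/2 + a₂ (mod N)`, `a ∣ d_Q`, and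
`0 ≤ d_Q + a₁(b+b_K)/2 < Na`.  Then with `𝔪 = ℤ(−a·conj(ω_Q)) + ℤa`, one has
`𝔫𝔪 = ℤ(a₁(−a·conj(ω_Q)) + d_Q) + ℤ(Na)`. -/
theorem stmt6 (K : Type*) [Field K] [NumberField K]
    (hdeg : Module.finrank ℚ K = 2) (hneg : NumberField.discr K < 0)
    (ι : K →+* ℂ)
    (b_K : ℤ) (τ : K)
    (hτ : (2 : ℂ) * ι τ = -(b_K : ℂ) + Complex.I * Real.sqrt (-(NumberField.discr K : ℝ)))
    (hOK : ∀ x : K, IsIntegral ℤ x ↔ x ∈ Submodule.span ℤ ({τ, 1} : Set K))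
    (𝔫 : Ideal (𝓞 K)) (h𝔫0 : 𝔫 ≠ ⊥) (h𝔫1 : 𝔫 ≠ ⊤)
    (N a₁ a₂ : ℤ)
    (hleast : IsLeast {n : ℤ | 0 < n ∧ ((n : ℤ) : 𝓞 K) ∈ 𝔫} N)
    (ha₁ : 0 < a₁) (ha₁N : a₁ ≤ N) (ha₂0 : 0 ≤ a₂) (ha₂N : a₂ < N)
    (hd₁ : a₁ ∣ N) (hd₂ : a₁ ∣ a₂)
    (hbasis𝔫 : algebraMap (𝓞 K) K '' (𝔫 : Set (𝓞 K))
      = (Submodule.span ℤ ({(a₁ : K) * τ + (a₂ : K), (N : K)} : Set K) : Set K))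
    (a b c : ℤ) (hpos : 0 < a)
    (hprim : Int.gcd a (Int.gcd b c) = 1)
    (hdisc : b ^ 2 - 4 * a * c = NumberField.discr K)
    (hgcd : Int.gcd N a = 1)
    (ω ωbar : K)
    (hroot : (a : K) * ω ^ 2 + (b : K) * ω + (c : K) = 0)
    (him : 0 < (ι ω).im)
    (hconj : ι ωbar = (starRingEnd ℂ) (ι ω))
    (e : ℤ) (he : 2 * e = b + b_K)
    (d_Q : ℤ)
    (hdQ1 : d_Q ≡ -a₁ * e + a₂ [ZMOD N])
    (hdQ2 : a ∣ d_Q)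
    (hdQ3 : 0 ≤ d_Q + a₁ * e) (hdQ4 : d_Q + a₁ * e < N * a)
    (𝔪 : Ideal (𝓞 K))
    (h𝔪 : algebraMap (𝓞 K) K '' (𝔪 : Set (𝓞 K))
      = (Submodule.span ℤ ({-(a : K) * ωbar, (a : K)} : Set K) : Set K)) :
    algebraMap (𝓞 K) K '' ((𝔫 * 𝔪 : Ideal (𝓞 K)) : Set (𝓞 K))
      = (Submodule.span ℤ
          ({(a₁ : K) * (-(a : K) * ωbar) + (d_Q : K), ((N * a : ℤ) : K)} : Set K) : Set K) :=
  stmt6_general K hneg ι b_K τ hτ 𝔫 N a₁ a₂ ha₁ hd₁ hd₂ hbasis𝔫 a b c hpos hdisc hgcd ω ωbar hroot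
    him hconj e he d_Q hdQ1 hdQ2 𝔪 h𝔪
end

section
/- Let N be a positive integer and let Γ_𝔫 be the subgroup of SL₂(ℤ) consisting of matrices [[c₁,c₂],[c₃,c₄]] with c₁ ≡ 1 (mod N), c₂ ≡ 0 (mod N/a₁), c₃ ≡ 0 (mod a₁), c₄ ≡ 1 (mod N), where a₁ is a positive divisor of N. Let α = [[p,q],[r,s]] ∈ SL₂(ℤ) satisfy r ≡ 0 (mod a₁) and s ≡ 1 + kr (mod N) for some integer k. Then there exist integers m, n such that Tⁿ α Tᵐ ∈ Γ_𝔫, where T = [[1,1],[0,1]]. -/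
open Matrix

def Tmat : Matrix.SpecialLinearGroup (Fin 2) ℤ :=
  ⟨!![1, 1; 0, 1], by norm_num [Matrix.det_fin_two_of]⟩

lemma Tmat_eq : Tmat = ModularGroup.T := rfl

/-- Let `a₁` be a positive divisor of `N > 0`, and let
`α = [[p,q],[r,s]] ∈ SL₂(ℤ)` with `r ≡ 0 (mod a₁)` and `s ≡ 1 + kr (mod N)` for some
integer `k`.  Then there are integers `m, n` with `Tⁿ α Tᵐ ∈ Γ_𝔫`, i.e. the entries
`c₁, c₂, c₃, c₄` of `Tⁿ α Tᵐ` satisfy `c₁ ≡ 1 (mod N)`, `c₂ ≡ 0 (mod N/a₁)`,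
`c₃ ≡ 0 (mod a₁)`, `c₄ ≡ 1 (mod N)`. -/
theorem stmt7 (N a₁ : ℤ) (hN : 0 < N) (ha₁ : 0 < a₁) (hdvd : a₁ ∣ N)
    (α : Matrix.SpecialLinearGroup (Fin 2) ℤ) (k : ℤ)
    (hr : (α : Matrix (Fin 2) (Fin 2) ℤ) 1 0 ≡ 0 [ZMOD a₁])
    (hs : (α : Matrix (Fin 2) (Fin 2) ℤ) 1 1
      ≡ 1 + k * (α : Matrix (Fin 2) (Fin 2) ℤ) 1 0 [ZMOD N]) :
    ∃ m n : ℤ,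
      ((Tmat ^ n * α * Tmat ^ m : Matrix.SpecialLinearGroup (Fin 2) ℤ)
          : Matrix (Fin 2) (Fin 2) ℤ) 0 0 ≡ 1 [ZMOD N] ∧
      ((Tmat ^ n * α * Tmat ^ m : Matrix.SpecialLinearGroup (Fin 2) ℤ)
          : Matrix (Fin 2) (Fin 2) ℤ) 0 1 ≡ 0 [ZMOD (N / a₁)] ∧
      ((Tmat ^ n * α * Tmat ^ m : Matrix.SpecialLinearGroup (Fin 2) ℤ)
          : Matrix (Fin 2) (Fin 2) ℤ) 1 0 ≡ 0 [ZMOD a₁] ∧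
      ((Tmat ^ n * α * Tmat ^ m : Matrix.SpecialLinearGroup (Fin 2) ℤ)
          : Matrix (Fin 2) (Fin 2) ℤ) 1 1 ≡ 1 [ZMOD N] := by
  set p := (α : Matrix (Fin 2) (Fin 2) ℤ) 0 0 with hp
  set q := (α : Matrix (Fin 2) (Fin 2) ℤ) 0 1 with hq
  set r := (α : Matrix (Fin 2) (Fin 2) ℤ) 1 0 with hrr
  set s := (α : Matrix (Fin 2) (Fin 2) ℤ) 1 1 with hss
  have hdet : p * s - q * r = 1 := by
    have := α.2
    rw [Matrix.det_fin_two] at this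
    linarith
  set n : ℤ := p * k - q with hn
  set m : ℤ := -(q + n * s) with hm
  refine ⟨m, n, ?_⟩
  have hE : ((Tmat ^ n * α * Tmat ^ m : Matrix.SpecialLinearGroup (Fin 2) ℤ)
      : Matrix (Fin 2) (Fin 2) ℤ) = !![p + n*r, (p + n*r)*m + (q + n*s); r, r*m + s] := by
    rw [Tmat_eq]
    simp only [Matrix.SpecialLinearGroup.coe_mul, ModularGroup.coe_T_zpow]
    ext i j
    fin_cases i <;> fin_cases j <;>
      simp [Matrix.mul_apply, Matrix.vecMul, dotProduct, Fin.sum_univ_succ,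
        ← hp, ← hq, ← hrr, ← hss]
  rw [hE]
  -- c₁ ≡ 1 [ZMOD N]
  have hc1 : p + n * r ≡ 1 [ZMOD N] := by
    calc p + n * r = p * (1 + k * r) - q * r := by rw [hn]; ring
      _ ≡ p * s - q * r [ZMOD N] := ((hs.symm.mul_left p).sub_right _)
      _ = 1 := hdet
  have hNa : N / a₁ ∣ N := by
    obtain ⟨c, hc⟩ := hdvd
    subst hc
    rw [Int.mul_ediv_cancel_left _ ha₁.ne']
    exact Dvd.intro_left a₁ rfl
  have hc1' : p + n * r ≡ 1 [ZMOD N / a₁] := hc1.of_dvd hNa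
  -- c₂ ≡ 0 [ZMOD N/a₁]
  have hc2 : (p + n * r) * m + (q + n * s) ≡ 0 [ZMOD N / a₁] := by
    calc (p + n * r) * m + (q + n * s)
        ≡ 1 * m + (q + n * s) [ZMOD N / a₁] := (hc1'.mul_right m).add_right _
      _ = 0 := by rw [hm]; ring
  -- c₄ ≡ 1 [ZMOD N]
  have hdet2 : (p + n*r) * (r*m + s) - ((p + n*r)*m + (q + n*s)) * r = 1 := by
    linear_combination hdet
  have h2dvd : (N / a₁) ∣ ((p + n*r)*m + (q + n*s)) := Int.modEq_zero_iff_dvd.mp hc2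
  have hrd : a₁ ∣ r := Int.modEq_zero_iff_dvd.mp hr
  have hNc2r : N ∣ ((p + n*r)*m + (q + n*s)) * r := by
    rw [← Int.ediv_mul_cancel hdvd]
    exact mul_dvd_mul h2dvd hrd
  obtain ⟨u, hu⟩ : N ∣ 1 - (p + n * r) := hc1.dvd
  obtain ⟨v, hv⟩ := hNc2r
  have hc4 : r * m + s ≡ 1 [ZMOD N] := by
    rw [Int.modEq_iff_dvd]
    exact ⟨-(r*m+s)*u - v, by linear_combination -(r*m+s)*hu - hv - hdet2⟩
  exact ⟨by simpa using hc1, by simpa using hc2, by simpa using hr, by simpa using hc4⟩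
end
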